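/- Fix a natural number N > 0. There is a constant C such that for every signature σ, every σ-EME Φ, and every rooted abstract Φ-model (A,0) of size at most N, there exists a formula δ_A ∈ ML(Φ) of dag-size at most C·2^N·max_{φ∈Φ}|φ| such that for every rooted abstract Φ-model (A',0) of size at most N: A',0 ⊨ δ_A if and only if A',0 ∼_Φ A,0. -/
import Mathlib


inductive MForm (α : Type) : Type
  | top : MForm α
  | atom : α → MForm α
  | neg : MForm α → MForm α
  | and : MForm α → MForm α → MForm α
  | box : MForm α → MForm α
deriving DecidableEq

namespace MForm

def imp {α : Type} (φ ψ : MForm α) : MForm α := neg (and φ (neg ψ))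

def dia {α : Type} (φ : MForm α) : MForm α := neg (box (neg φ))

def sig {α : Type} [DecidableEq α] : MForm α → Finset α
  | top => ∅
  | atom p => {p}
  | neg φ => sig φ
  | and φ ψ => sig φ ∪ sig ψ
  | box φ => sig φ

def IsProp {α : Type} : MForm α → Prop
  | top => True
  | atom _ => True
  | neg φ => IsProp φ
  | and φ ψ => IsProp φ ∧ IsProp ψ
  | box _ => False

def subf {α : Type} [DecidableEq α] : MForm α → Finset (MForm α)
  | top => {top}
  | atom p => {atom p}
  | neg φ => insert (neg φ) (subf φ)
  | and φ ψ => insert (and φ ψ) (subf φ ∪ subf ψ)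
  | box φ => insert (box φ) (subf φ)

/-- The dag-size of a formula: the number of its distinct subformulas. -/
def dagSize {α : Type} [DecidableEq α] (φ : MForm α) : ℕ := (subf φ).card

end MForm

def psat {α : Type} (v : α → Prop) : MForm α → Prop
  | .top => True
  | .atom p => v p
  | .neg φ => ¬ psat v φ
  | .and φ ψ => psat v φ ∧ psat v ψ
  | .box _ => True

/-- Propositional tautology. -/
def PTaut {α : Type} (φ : MForm α) : Prop := ∀ v : α → Prop, psat v φ

def bigAnd {α : Type} : List (MForm α) → MForm α
  | [] => .top
  | φ :: l => .and φ (bigAnd l)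

def bigOr {α : Type} (l : List (MForm α)) : MForm α := .neg (bigAnd (l.map .neg))

def boxIter {α : Type} : ℕ → MForm α → MForm α
  | 0, φ => φ
  | n + 1, φ => .box (boxIter n φ)

def diaIter {α : Type} : ℕ → MForm α → MForm α
  | 0, φ => φ
  | n + 1, φ => MForm.dia (diaIter n φ)

/-- `□^{≤n} φ`. -/
def ble {α : Type} (n : ℕ) (φ : MForm α) : MForm α :=
  bigAnd ((List.range (n + 1)).map (fun k => boxIter k φ))

/-- `◇^{≤n} φ`. -/
def dle {α : Type} (n : ℕ) (φ : MForm α) : MForm α := .neg (ble n (.neg φ))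

def substAtoms {α β : Type} (s : α → MForm β) : MForm α → MForm β
  | .top => .top
  | .atom a => s a
  | .neg φ => .neg (substAtoms s φ)
  | .and φ ψ => .and (substAtoms s φ) (substAtoms s ψ)
  | .box φ => .box (substAtoms s φ)

structure Frame where
  W : Type
  ne : Nonempty W
  R : W → W → Prop

structure PFrame extends Frame where
  pt : W

def sat (F : Frame) (V : F.W → ℕ → Prop) : F.W → MForm ℕ → Prop
  | w, .top => True
  | w, .atom p => V w p
  | w, .neg φ => ¬ sat F V w φ
  | w, .and φ ψ => sat F V w φ ∧ sat F V w ψ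
  | w, .box φ => ∀ v, F.R w v → sat F V v φ

def validAt (F : Frame) (w : F.W) (φ : MForm ℕ) : Prop := ∀ V, sat F V w φ

def Log (𝓕 : Set PFrame) : Set (MForm ℕ) := {φ | ∀ P ∈ 𝓕, validAt P.toFrame P.pt φ}

def Rooted (F : Frame) (w : F.W) : Prop := ∀ v, Relation.ReflTransGen F.R w v

def StrImp (L : Set (MForm ℕ)) (σ : Finset ℕ) (φ χ : MForm ℕ) : Prop :=
  χ.sig ⊆ σ ∧ φ.imp χ ∈ L ∧
    ∀ ψ : MForm ℕ, ψ.sig ⊆ σ → φ.imp ψ ∈ L → χ.imp ψ ∈ L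

def UnifInt (L : Set (MForm ℕ)) (σ : Finset ℕ) (φ χ : MForm ℕ) : Prop :=
  χ.sig ⊆ σ ∧ φ.imp χ ∈ L ∧
    ∀ ψ : MForm ℕ, ψ.sig ∩ φ.sig ⊆ σ → φ.imp ψ ∈ L → χ.imp ψ ∈ L

def CraigInt (L : Set (MForm ℕ)) (φ ψ χ : MForm ℕ) : Prop :=
  φ.imp χ ∈ L ∧ χ.imp ψ ∈ L ∧ χ.sig ⊆ φ.sig ∩ ψ.sig

def HasCIP (L : Set (MForm ℕ)) : Prop :=
  ∀ φ ψ : MForm ℕ, φ.imp ψ ∈ L → ∃ χ, CraigInt L φ ψ χ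

def IsBisim (σ : Finset ℕ) (F₁ : Frame) (V₁ : F₁.W → ℕ → Prop)
    (F₂ : Frame) (V₂ : F₂.W → ℕ → Prop) (Z : F₁.W → F₂.W → Prop) : Prop :=
  (∀ w₁ w₂, Z w₁ w₂ → ∀ p ∈ σ, (V₁ w₁ p ↔ V₂ w₂ p)) ∧
  (∀ w₁ w₂ v₁, Z w₁ w₂ → F₁.R w₁ v₁ → ∃ v₂, F₂.R w₂ v₂ ∧ Z v₁ v₂) ∧
  (∀ w₁ w₂ v₂, Z w₁ w₂ → F₂.R w₂ v₂ → ∃ v₁, F₁.R w₁ v₁ ∧ Z v₁ v₂)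

def Bisim (σ : Finset ℕ) (F₁ : Frame) (V₁ : F₁.W → ℕ → Prop) (w₁ : F₁.W)
    (F₂ : Frame) (V₂ : F₂.W → ℕ → Prop) (w₂ : F₂.W) : Prop :=
  ∃ Z, IsBisim σ F₁ V₁ F₂ V₂ Z ∧ Z w₁ w₂

def IsEME (σ : Finset ℕ) (Φ : Finset (MForm ℕ)) : Prop :=
  (∀ φ ∈ Φ, φ.IsProp ∧ φ.sig ⊆ σ) ∧
  (∀ v : ℕ → Prop, ∃ φ ∈ Φ, psat v φ) ∧
  (∀ φ ∈ Φ, ∀ ψ ∈ Φ, φ ≠ ψ → ∀ v : ℕ → Prop, ¬ (psat v φ ∧ psat v ψ))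

def IsCover (σ : Finset ℕ) (Φ : Finset (MForm ℕ)) (F : Frame) (V : F.W → ℕ → Prop) : Prop :=
  ∀ φ ∈ Φ, ∀ w₁ w₂, sat F V w₁ φ → sat F V w₂ φ →
    ∀ χ : MForm ℕ, χ.IsProp → χ.sig ⊆ σ → (sat F V w₁ χ ↔ sat F V w₂ χ)

noncomputable def coverFml (σ : Finset ℕ) (Φ : Finset (MForm ℕ)) (N : ℕ) : MForm ℕ :=
  bigAnd (Φ.toList.map (fun φ => bigAnd (σ.toList.map (fun p =>
    MForm.imp (dle N (.and φ (.atom p))) (ble N (MForm.imp φ (.atom p)))))))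

/-- Satisfaction of formulas of `ML(Φ)` (modal formulas whose atoms are formulas)
on abstract Φ-models `(F,f)`: an atom `φ` holds at `w` iff `f w = φ`. -/
def asat (F : Frame) (f : F.W → MForm ℕ) : F.W → MForm (MForm ℕ) → Prop
  | _, .top => True
  | w, .atom φ => f w = φ
  | w, .neg δ => ¬ asat F f w δ
  | w, .and δ₁ δ₂ => asat F f w δ₁ ∧ asat F f w δ₂
  | w, .box δ => ∀ v, F.R w v → asat F f v δ

/-- Abstract Φ-bisimulation. -/
def AbsBisim (F₁ : Frame) (f₁ : F₁.W → MForm ℕ)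
    (F₂ : Frame) (f₂ : F₂.W → MForm ℕ) (Z : F₁.W → F₂.W → Prop) : Prop :=
  (∀ w₁ w₂, Z w₁ w₂ → f₁ w₁ = f₂ w₂) ∧
  (∀ w₁ w₂ v₁, Z w₁ w₂ → F₁.R w₁ v₁ → ∃ v₂, F₂.R w₂ v₂ ∧ Z v₁ v₂) ∧
  (∀ w₁ w₂ v₂, Z w₁ w₂ → F₂.R w₂ v₂ → ∃ v₁, F₁.R w₁ v₁ ∧ Z v₁ v₂)

namespace Stmt5Aux

/-! ### Basic size lemmas -/

lemma subf_self {α : Type} [DecidableEq α] (φ : MForm α) : φ ∈ φ.subf := by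
  cases φ <;> simp [MForm.subf]

lemma dagSize_pos {α : Type} [DecidableEq α] (φ : MForm α) : 1 ≤ φ.dagSize :=
  Finset.card_pos.2 ⟨φ, subf_self φ⟩

/-- Tree size of a formula. -/
def tsize {α : Type} : MForm α → ℕ
  | .top => 1
  | .atom _ => 1
  | .neg φ => tsize φ + 1
  | .and φ ψ => tsize φ + tsize ψ + 1
  | .box φ => tsize φ + 1

lemma dagSize_le_tsize {α : Type} [DecidableEq α] (φ : MForm α) : φ.dagSize ≤ tsize φ := by
  induction φ with
  | top => simp [MForm.dagSize, MForm.subf, tsize]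
  | atom p => simp [MForm.dagSize, MForm.subf, tsize]
  | neg φ ih =>
      calc (MForm.neg φ).dagSize ≤ φ.dagSize + 1 := by
            simpa [MForm.dagSize, MForm.subf] using Finset.card_insert_le _ _
        _ ≤ tsize (MForm.neg φ) := by simp [tsize]; omega
  | and φ ψ ih1 ih2 =>
      calc (MForm.and φ ψ).dagSize ≤ (φ.subf ∪ ψ.subf).card + 1 := by
            simpa [MForm.dagSize, MForm.subf] using Finset.card_insert_le _ _
        _ ≤ φ.dagSize + ψ.dagSize + 1 := by
            have := Finset.card_union_le φ.subf ψ.subf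
            simp [MForm.dagSize]; omega
        _ ≤ tsize (MForm.and φ ψ) := by simp [tsize]; omega
  | box φ ih =>
      calc (MForm.box φ).dagSize ≤ φ.dagSize + 1 := by
            simpa [MForm.dagSize, MForm.subf] using Finset.card_insert_le _ _
        _ ≤ tsize (MForm.box φ) := by simp [tsize]; omega

lemma tsize_bigAnd {α : Type} (l : List (MForm α)) (m : ℕ)
    (h : ∀ φ ∈ l, tsize φ ≤ m) : tsize (bigAnd l) ≤ 1 + l.length * (m + 1) := by
  induction l with
  | nil => simp [bigAnd, tsize]
  | cons a t ih =>
      have ha := h a (by simp)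
      have ht := ih (fun φ hφ => h φ (by simp [hφ]))
      simp only [bigAnd, tsize, List.length_cons]
      nlinarith

lemma tsize_bigOr {α : Type} (l : List (MForm α)) (m : ℕ)
    (h : ∀ φ ∈ l, tsize φ ≤ m) : tsize (bigOr l) ≤ 2 + l.length * (m + 2) := by
  have := tsize_bigAnd (l.map .neg) (m + 1) (by
    intro φ hφ
    simp only [List.mem_map] at hφ
    obtain ⟨ψ, hψ, rfl⟩ := hφ
    simpa [tsize] using h ψ hψ)
  simp only [bigOr, tsize, List.length_map] at this ⊢
  have h2 : m + 1 + 1 = m + 2 := rfl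
  rw [h2] at this
  omega

lemma tsize_dia {α : Type} (φ : MForm α) : tsize (MForm.dia φ) = tsize φ + 3 := by
  simp [MForm.dia, tsize]

/-! ### Semantics helpers -/

lemma asat_bigAnd (F : Frame) (f : F.W → MForm ℕ) (w : F.W) (l : List (MForm (MForm ℕ))) :
    asat F f w (bigAnd l) ↔ ∀ φ ∈ l, asat F f w φ := by
  induction l with
  | nil => simp [bigAnd, asat]
  | cons a t ih => simp [bigAnd, asat, ih]

lemma asat_bigOr (F : Frame) (f : F.W → MForm ℕ) (w : F.W) (l : List (MForm (MForm ℕ))) :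
    asat F f w (bigOr l) ↔ ∃ φ ∈ l, asat F f w φ := by
  simp [bigOr, asat, asat_bigAnd]

lemma asat_dia (F : Frame) (f : F.W → MForm ℕ) (w : F.W) (φ : MForm (MForm ℕ)) :
    asat F f w (MForm.dia φ) ↔ ∃ v, F.R w v ∧ asat F f v φ := by
  simp [MForm.dia, asat]

/-! ### sig helpers -/

lemma sig_bigAnd_subset {α : Type} [DecidableEq α] (l : List (MForm α)) (S : Finset α)
    (h : ∀ φ ∈ l, φ.sig ⊆ S) : (bigAnd l).sig ⊆ S := by
  induction l with
  | nil => simp [bigAnd, MForm.sig]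
  | cons a t ih =>
      simp only [bigAnd, MForm.sig, Finset.union_subset_iff]
      exact ⟨h a (by simp), ih (fun φ hφ => h φ (by simp [hφ]))⟩

lemma sig_bigOr_subset {α : Type} [DecidableEq α] (l : List (MForm α)) (S : Finset α)
    (h : ∀ φ ∈ l, φ.sig ⊆ S) : (bigOr l).sig ⊆ S := by
  simp only [bigOr, MForm.sig]
  apply sig_bigAnd_subset
  intro φ hφ
  simp only [List.mem_map] at hφ
  obtain ⟨ψ, hψ, rfl⟩ := hφ
  simpa [MForm.sig] using h ψ hψ

/-! ### k-step abstract bisimilarity -/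

def BStep (A' : Frame) (f' : A'.W → MForm ℕ) (A : Frame) (f : A.W → MForm ℕ)
    (Z : A'.W → A.W → Prop) (w' : A'.W) (w : A.W) : Prop :=
  f' w' = f w ∧
    (∀ v', A'.R w' v' → ∃ v, A.R w v ∧ Z v' v) ∧
    (∀ v, A.R w v → ∃ v', A'.R w' v' ∧ Z v' v)

def Bk (A' : Frame) (f' : A'.W → MForm ℕ) (A : Frame) (f : A.W → MForm ℕ) :
    ℕ → A'.W → A.W → Prop
  | 0 => fun w' w => f' w' = f w
  | k + 1 => BStep A' f' A f (Bk A' f' A f k)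

lemma BStep_mono {A' : Frame} {f' : A'.W → MForm ℕ} {A : Frame} {f : A.W → MForm ℕ}
    {Z Z' : A'.W → A.W → Prop} (h : ∀ a b, Z a b → Z' a b) :
    ∀ a b, BStep A' f' A f Z a b → BStep A' f' A f Z' a b := by
  rintro a b ⟨h1, h2, h3⟩
  refine ⟨h1, fun v' hr => ?_, fun v hr => ?_⟩
  · obtain ⟨v, hv, hz⟩ := h2 v' hr; exact ⟨v, hv, h _ _ hz⟩
  · obtain ⟨v', hv', hz⟩ := h3 v hr; exact ⟨v', hv', h _ _ hz⟩

lemma BStep_congr {A' : Frame} {f' : A'.W → MForm ℕ} {A : Frame} {f : A.W → MForm ℕ}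
    {Z Z' : A'.W → A.W → Prop} (h : ∀ a b, Z a b ↔ Z' a b) :
    ∀ a b, BStep A' f' A f Z a b ↔ BStep A' f' A f Z' a b :=
  fun a b => ⟨BStep_mono (fun a b => (h a b).1) a b, BStep_mono (fun a b => (h a b).2) a b⟩

lemma Bk_succ_imp {A' : Frame} {f' : A'.W → MForm ℕ} {A : Frame} {f : A.W → MForm ℕ} :
    ∀ k a b, Bk A' f' A f (k + 1) a b → Bk A' f' A f k a b := by
  intro k
  induction k with
  | zero => intro a b h; exact h.1
  | succ k ih => exact fun a b h => BStep_mono ih a b h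

lemma absBisim_imp_Bk {A' : Frame} {f' : A'.W → MForm ℕ} {A : Frame} {f : A.W → MForm ℕ}
    {Z : A'.W → A.W → Prop} (hZ : AbsBisim A' f' A f Z) :
    ∀ k a b, Z a b → Bk A' f' A f k a b := by
  intro k
  induction k with
  | zero => exact fun a b h => hZ.1 a b h
  | succ k ih =>
      intro a b h
      refine ⟨hZ.1 a b h, fun v' hr => ?_, fun v hr => ?_⟩
      · obtain ⟨v, hv, hz⟩ := hZ.2.1 a b v' h hr; exact ⟨v, hv, ih _ _ hz⟩
      · obtain ⟨v', hv', hz⟩ := hZ.2.2 a b v h hr; exact ⟨v', hv', ih _ _ hz⟩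

/-! ### Stabilization of antitone chains of sets -/

lemma exists_stab {P : Type} [Finite P] (S : ℕ → Set P) (hS : ∀ k, S (k + 1) ⊆ S k) :
    ∃ j ≤ Nat.card P, S j = S (j + 1) := by
  by_contra hcon
  push_neg at hcon
  have key : ∀ j, j ≤ Nat.card P + 1 → (S j).ncard + j ≤ (S 0).ncard := by
    intro j
    induction j with
    | zero => simp
    | succ j ih =>
        intro hj
        have hne : S j ≠ S (j + 1) := hcon j (by omega)
        have hss : S (j + 1) ⊂ S j := (hS j).ssubset_of_ne (Ne.symm hne)
        have hlt : (S (j + 1)).ncard < (S j).ncard :=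
          Set.ncard_lt_ncard hss (Set.toFinite _)
        have := ih (by omega)
        omega
  have h0 : (S 0).ncard ≤ Nat.card P := by
    have := Set.ncard_le_ncard (Set.subset_univ (S 0)) Set.finite_univ
    simpa [Set.ncard_univ] using this
  have := key (Nat.card P + 1) le_rfl
  omega

lemma Bk_stab {A' : Frame} {f' : A'.W → MForm ℕ} {A : Frame} {f : A.W → MForm ℕ}
    [Finite A'.W] [Finite A.W] {M : ℕ} (hM : Nat.card A'.W * Nat.card A.W ≤ M) :
    ∀ a b, Bk A' f' A f M a b ↔ Bk A' f' A f (M + 1) a b := by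
  set S : ℕ → Set (A'.W × A.W) := fun k => {p | Bk A' f' A f k p.1 p.2} with hSdef
  have hanti : ∀ k, S (k + 1) ⊆ S k := fun k p hp => Bk_succ_imp k p.1 p.2 hp
  obtain ⟨j, hjle, hj⟩ := exists_stab S hanti
  have hjiff : ∀ a b, Bk A' f' A f j a b ↔ Bk A' f' A f (j + 1) a b := by
    intro a b
    have := Set.ext_iff.1 hj (a, b)
    simpa [hSdef] using this
  have hprop : ∀ m, j ≤ m → ∀ a b, Bk A' f' A f m a b ↔ Bk A' f' A f j a b := by
    intro m hm
    induction m, hm using Nat.le_induction with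
    | base => exact fun a b => Iff.rfl
    | succ m hm ih =>
        intro a b
        have h1 : Bk A' f' A f (m + 1) a b ↔ BStep A' f' A f (Bk A' f' A f j) a b :=
          BStep_congr ih a b
        exact h1.trans (hjiff a b).symm
  have hcard : Nat.card (A'.W × A.W) = Nat.card A'.W * Nat.card A.W := Nat.card_prod _ _
  have hjM : j ≤ M := by rw [hcard] at hjle; omega
  intro a b
  exact (hprop M hjM a b).trans (hprop (M + 1) (by omega) a b).symm

end Stmt5Aux

namespace Stmt5Aux

lemma asat_and (F : Frame) (f : F.W → MForm ℕ) (w : F.W) (a b : MForm (MForm ℕ)) :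
    asat F f w (.and a b) ↔ asat F f w a ∧ asat F f w b := Iff.rfl

lemma asat_atom (F : Frame) (f : F.W → MForm ℕ) (w : F.W) (p : MForm ℕ) :
    asat F f w (.atom p) ↔ f w = p := Iff.rfl

lemma asat_box (F : Frame) (f : F.W → MForm ℕ) (w : F.W) (a : MForm (MForm ℕ)) :
    asat F f w (.box a) ↔ ∀ v, F.R w v → asat F f v a := Iff.rfl

/-! ### Characteristic formulas -/

def chi (A : Frame) (f : A.W → MForm ℕ) (s : A.W → List A.W) :
    ℕ → A.W → MForm (MForm ℕ)
  | 0, w => .atom (f w)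
  | k + 1, w =>
      .and (.atom (f w))
        (.and (bigAnd ((s w).map (fun v => MForm.dia (chi A f s k v))))
              (.box (bigOr ((s w).map (fun v => chi A f s k v)))))

lemma asat_chi {A : Frame} {f : A.W → MForm ℕ} {s : A.W → List A.W}
    (hs : ∀ w v, v ∈ s w ↔ A.R w v)
    {A' : Frame} {f' : A'.W → MForm ℕ} :
    ∀ (k : ℕ) (w : A.W) (w' : A'.W),
      asat A' f' w' (chi A f s k w) ↔ Bk A' f' A f k w' w := by
  intro k
  induction k with
  | zero => intro w w'; exact Iff.rfl
  | succ k ih =>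
      intro w w'
      show asat A' f' w' (.and (.atom (f w))
        (.and (bigAnd ((s w).map (fun v => MForm.dia (chi A f s k v))))
              (.box (bigOr ((s w).map (fun v => chi A f s k v)))))) ↔ _
      rw [asat_and, asat_atom, asat_and, asat_box]
      simp only [asat_bigAnd, asat_bigOr, asat_dia, List.mem_map]
      show _ ↔ (f' w' = f w ∧ _ ∧ _)
      constructor
      · rintro ⟨h1, h2, h3⟩
        refine ⟨h1, ?_, ?_⟩
        · intro v' hr
          obtain ⟨φ, ⟨v, hv, rfl⟩, hsat⟩ := h3 v' hr
          exact ⟨v, (hs w v).1 hv, (ih v v').1 hsat⟩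
        · intro v hv
          have h4 := h2 (MForm.dia (chi A f s k v)) ⟨v, (hs w v).2 hv, rfl⟩
          obtain ⟨u, hu1, hu2⟩ := (asat_dia _ _ _ _).1 h4
          exact ⟨u, hu1, (ih v u).1 hu2⟩
      · rintro ⟨h1, h2, h3⟩
        refine ⟨h1, ?_, ?_⟩
        · rintro φ ⟨v, hv, rfl⟩
          obtain ⟨v', hr, hb⟩ := h3 v ((hs w v).1 hv)
          exact (asat_dia _ _ _ _).2 ⟨v', hr, (ih v v').2 hb⟩
        · intro v' hr
          obtain ⟨v, hv, hb⟩ := h2 v' hr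
          exact ⟨chi A f s k v, ⟨v, (hs w v).2 hv, rfl⟩, (ih v v').2 hb⟩

lemma sig_dia {α : Type} [DecidableEq α] (φ : MForm α) : (MForm.dia φ).sig = φ.sig := rfl

lemma sig_chi {A : Frame} {f : A.W → MForm ℕ} {s : A.W → List A.W} {Φ : Finset (MForm ℕ)}
    (hf : ∀ w, f w ∈ Φ) : ∀ (k : ℕ) (w : A.W), (chi A f s k w).sig ⊆ Φ := by
  intro k
  induction k with
  | zero =>
      intro w
      have : (chi A f s 0 w).sig = {f w} := rfl
      rw [this]
      simpa using hf w
  | succ k ih =>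
      intro w
      have hshape : (chi A f s (k + 1) w).sig =
          {f w} ∪ ((bigAnd ((s w).map (fun v => MForm.dia (chi A f s k v)))).sig ∪
            (bigOr ((s w).map (fun v => chi A f s k v))).sig) := rfl
      rw [hshape]
      refine Finset.union_subset (by simpa using hf w) (Finset.union_subset ?_ ?_)
      · apply sig_bigAnd_subset
        intro φ hφ
        simp only [List.mem_map] at hφ
        obtain ⟨v, hv, rfl⟩ := hφ
        rw [sig_dia]
        exact ih v
      · apply sig_bigOr_subset
        intro φ hφ
        simp only [List.mem_map] at hφ
        obtain ⟨v, hv, rfl⟩ := hφ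
        exact ih v

def g (N : ℕ) : ℕ → ℕ
  | 0 => 1
  | k + 1 => 2 * N * g N k + 6 * N + 7

lemma tsize_chi {A : Frame} {f : A.W → MForm ℕ} {s : A.W → List A.W} {N : ℕ}
    (hlen : ∀ w, (s w).length ≤ N) :
    ∀ (k : ℕ) (w : A.W), tsize (chi A f s k w) ≤ g N k := by
  intro k
  induction k with
  | zero =>
      intro w
      have : tsize (chi A f s 0 w) = 1 := rfl
      rw [this]; exact le_refl _
  | succ k ih =>
      intro w
      have hB1 := tsize_bigAnd ((s w).map (fun v => MForm.dia (chi A f s k v))) (g N k + 3)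
        (by rintro φ hφ
            simp only [List.mem_map] at hφ
            obtain ⟨v, hv, rfl⟩ := hφ
            rw [tsize_dia]
            have := ih v
            omega)
      have hB2 := tsize_bigOr ((s w).map (fun v => chi A f s k v)) (g N k)
        (by rintro φ hφ
            simp only [List.mem_map] at hφ
            obtain ⟨v, hv, rfl⟩ := hφ
            exact ih v)
      simp only [List.length_map] at hB1 hB2
      rw [show g N k + 3 + 1 = g N k + 4 from rfl] at hB1
      have hl := hlen w
      have m1 : (s w).length * (g N k + 4) ≤ N * (g N k + 4) :=
        Nat.mul_le_mul_right _ hl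
      have m2 : (s w).length * (g N k + 2) ≤ N * (g N k + 2) :=
        Nat.mul_le_mul_right _ hl
      have hshape : tsize (chi A f s (k + 1) w) =
          1 + (tsize (bigAnd ((s w).map (fun v => MForm.dia (chi A f s k v)))) +
            (tsize (bigOr ((s w).map (fun v => chi A f s k v))) + 1) + 1) + 1 := rfl
      have hg : g N (k + 1) = 2 * N * g N k + 6 * N + 7 := rfl
      have hring : N * (g N k + 4) + N * (g N k + 2) = 2 * N * g N k + 6 * N := by ring
      rw [hshape, hg]
      omega

end Stmt5Aux

/-- for fixed `N > 0` there is a constant `C` such that every rooted abstract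
Φ-model `(A,0)` of size at most `N` admits an identifying formula `δ_A ∈ ML(Φ)` of dag-size
at most `C·2^N·max_{φ∈Φ}|φ|`, which holds at the root of a rooted abstract Φ-model of size
at most `N` iff that model is abstractly Φ-bisimilar to `(A,0)`. -/
theorem stmt5 (N : ℕ) (hN : 0 < N) :
    ∃ C : ℕ, ∀ (σ : Finset ℕ) (Φ : Finset (MForm ℕ)), IsEME σ Φ →
      ∀ (A : Frame) (fA : A.W → MForm ℕ) (rA : A.W),
        (∀ w, fA w ∈ Φ) → Rooted A rA → Finite A.W → Nat.card A.W ≤ N →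
      ∃ δ : MForm (MForm ℕ), δ.sig ⊆ Φ ∧
        δ.dagSize ≤ C * 2 ^ N * Φ.sup MForm.dagSize ∧
        ∀ (A' : Frame) (fA' : A'.W → MForm ℕ) (rA' : A'.W),
          (∀ w, fA' w ∈ Φ) → Rooted A' rA' → Finite A'.W → Nat.card A'.W ≤ N →
          (asat A' fA' rA' δ ↔ ∃ Z, AbsBisim A' fA' A fA Z ∧ Z rA' rA) := by
  classical
  refine ⟨Stmt5Aux.g N (N * N), ?_⟩
  intro σ Φ hEME A fA rA hfA hroot hFin hcardA
  letI := hFin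
  letI : Fintype A.W := Fintype.ofFinite A.W
  set s : A.W → List A.W := fun w => (Finset.univ.filter (fun v => A.R w v)).toList with hsdef
  have hs : ∀ w v, v ∈ s w ↔ A.R w v := by
    intro w v
    simp [hsdef]
  have hlen : ∀ w, (s w).length ≤ N := by
    intro w
    have h1 : (s w).length = (Finset.univ.filter (fun v => A.R w v)).card :=
      Finset.length_toList _
    have h2 : (Finset.univ.filter (fun v => A.R w v)).card ≤ Fintype.card A.W :=
      le_trans (Finset.card_filter_le _ _) (by simp)
    rw [Nat.card_eq_fintype_card] at hcardA
    omega
  refine ⟨Stmt5Aux.chi A fA s (N * N) rA, Stmt5Aux.sig_chi hfA _ _, ?_, ?_⟩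
  · have h1 : (Stmt5Aux.chi A fA s (N * N) rA).dagSize ≤ Stmt5Aux.g N (N * N) :=
      le_trans (Stmt5Aux.dagSize_le_tsize _) (Stmt5Aux.tsize_chi hlen _ _)
    have hM : 1 ≤ Φ.sup MForm.dagSize :=
      le_trans (Stmt5Aux.dagSize_pos (fA rA)) (Finset.le_sup (hfA rA))
    have h2 : (1 : ℕ) ≤ 2 ^ N := Nat.one_le_two_pow
    calc (Stmt5Aux.chi A fA s (N * N) rA).dagSize
        ≤ Stmt5Aux.g N (N * N) * 1 * 1 := by simpa using h1
      _ ≤ Stmt5Aux.g N (N * N) * 2 ^ N * Φ.sup MForm.dagSize :=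
          Nat.mul_le_mul (Nat.mul_le_mul le_rfl h2) hM
  · intro A' fA' rA' hfA' hroot' hFin' hcardA'
    letI := hFin'
    constructor
    · intro hsat
      have hB : Stmt5Aux.Bk A' fA' A fA (N * N) rA' rA :=
        (Stmt5Aux.asat_chi hs _ _ _).1 hsat
      have hstab := Stmt5Aux.Bk_stab (A' := A') (f' := fA') (A := A) (f := fA)
        (M := N * N) (le_trans (Nat.mul_le_mul le_rfl hcardA) (Nat.mul_le_mul_right _ hcardA'))
      refine ⟨Stmt5Aux.Bk A' fA' A fA (N * N), ⟨?_, ?_, ?_⟩, hB⟩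
      · intro w1 w2 h
        exact ((hstab w1 w2).1 h).1
      · intro w1 w2 v1 h hr
        exact ((hstab w1 w2).1 h).2.1 v1 hr
      · intro w1 w2 v2 h hr
        exact ((hstab w1 w2).1 h).2.2 v2 hr
    · rintro ⟨Z, hZ, hzr⟩
      exact (Stmt5Aux.asat_chi hs _ _ _).2 (Stmt5Aux.absBisim_imp_Bk hZ _ _ _ hzr)
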